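/- Every nonempty x-interval of a cyclic suffix array is an ℓ-interval for some unique ℓ ≥ |x|, and conversely every ℓ-interval is an x-interval for some string x of length ℓ. -/

import Mathlib

/-!
Two suffixes share a prefix `x` exactly when every LCP value between their ranks is at least
`|x|`, and by sortedness the suffixes with prefix `x` occupy a contiguous block of ranks. So
inside a nonempty x-interval all LCP values are `≥ |x|` while the two boundary values are `< |x|`:
it is the ℓ-interval for ℓ the minimum of the inner LCP values, and this minimum is the only
possible ℓ. Conversely, the suffixes sharing the length-ℓ prefix of the first suffix of an
ℓ-interval are exactly those ranked inside it.
-/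

set_option linter.unusedSectionVars false

namespace SILA

variable {α : Type*} [LinearOrder α]

/-- Lexicographic order on infinite strings. -/
def lexLE (f g : ℕ → α) : Prop :=
  f = g ∨ ∃ k, (∀ m < k, f m = g m) ∧ f k < g k

/-- Length of longest common prefix of two infinite strings, in ℕ∞. -/
noncomputable def lcpInf (f g : ℕ → α) : ℕ∞ :=
  sSup {m : ℕ∞ | ∀ k : ℕ, (k : ℕ∞) < m → f k = g k}

/-- A (nonempty) cyclic word. -/
structure CyclicWord (α : Type*) where
  word : List α
  ne : word ≠ []

def CyclicWord.len (w : CyclicWord α) : ℕ := w.word.length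

lemma CyclicWord.len_pos (w : CyclicWord α) : 0 < w.len :=
  List.length_pos_iff.mpr w.ne

/-- Positions in a multiset (family) of cyclic words. -/
def Pos {s : ℕ} (W : Fin s → CyclicWord α) : Type _ :=
  (i : Fin s) × Fin (W i).len

instance {s : ℕ} (W : Fin s → CyclicWord α) : Fintype (Pos W) := by
  unfold Pos; infer_instance

/-- The infinite cyclic suffix starting at a position. -/
def suffixAt {s : ℕ} (W : Fin s → CyclicWord α) (p : Pos W) : ℕ → α :=
  fun k => (W p.1).word.get ⟨(p.2.val + k) % (W p.1).len, Nat.mod_lt _ (W p.1).len_pos⟩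

/-- `SA` is a cyclic suffix array of `W`: it enumerates all positions in
nondecreasing lexicographic order of their cyclic suffixes. -/
def IsCyclicSA {s n : ℕ} (W : Fin s → CyclicWord α) (SA : Fin n ≃ Pos W) : Prop :=
  ∀ r r' : Fin n, r ≤ r' → lexLE (suffixAt W (SA r)) (suffixAt W (SA r'))

/-- The LCP array of a cyclic suffix array (meaningful on indices 1..n-1). -/
noncomputable def lcpArr {s n : ℕ} (W : Fin s → CyclicWord α) (SA : Fin n ≃ Pos W)
    (r : ℕ) : ℕ∞ :=
  if h : 0 < r ∧ r < n then
    lcpInf (suffixAt W (SA ⟨r - 1, by omega⟩)) (suffixAt W (SA ⟨r, h.2⟩))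
  else 0

/-- The Burrows–Wheeler transform: character cyclically preceding the suffix of rank `r`. -/
def bwt {s n : ℕ} (W : Fin s → CyclicWord α) (SA : Fin n ≃ Pos W) (r : Fin n) : α :=
  (W (SA r).1).word.get ⟨((SA r).2.val + (W (SA r).1).len - 1) % (W (SA r).1).len,
    Nat.mod_lt _ (W (SA r).1).len_pos⟩

/-- `x` is a (finite) prefix of the infinite string `f`. -/
def IsPrefix (x : List α) (f : ℕ → α) : Prop :=
  ∀ m : Fin x.length, f m.val = x.get m

/-- `[i..j)` is the x-interval: the ranks of exactly those suffixes with prefix `x`. -/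
def IsXInterval {s n : ℕ} (W : Fin s → CyclicWord α) (SA : Fin n ≃ Pos W)
    (x : List α) (i j : ℕ) : Prop :=
  i ≤ j ∧ j ≤ n ∧ ∀ r : Fin n, IsPrefix x (suffixAt W (SA r)) ↔ (i ≤ r.val ∧ r.val < j)

/-- `[i..j)` is an ℓ-interval of the LCP array `L` (of length `n`, indices 1..n-1). -/
def IsLInterval (L : ℕ → ℕ∞) (n : ℕ) (ℓ : ℕ∞) (i j : ℕ) : Prop :=
  i < j ∧ j ≤ n ∧
  (i = 0 ∨ L i < ℓ) ∧
  (∀ r, i < r → r < j → ℓ ≤ L r) ∧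
  ((i + 1 = j ∧ ℓ = ⊤) ∨ ∃ r, i < r ∧ r < j ∧ L r = ℓ) ∧
  (j = n ∨ L j < ℓ)


section InfiniteStrings

lemma eq_of_lt_lcpInf {f g : ℕ → α} {k : ℕ} (h : (k : ℕ∞) < lcpInf f g) : f k = g k := by
  obtain ⟨m, hm, hkm⟩ := lt_sSup_iff.mp h
  exact hm k hkm

lemma le_lcpInf {f g : ℕ → α} {m : ℕ} (h : ∀ k < m, f k = g k) : (m : ℕ∞) ≤ lcpInf f g :=
  le_sSup fun k hk => h k (by exact_mod_cast hk)

lemma isPrefix_iff_of_length_le_lcpInf {x : List α} {f g : ℕ → α}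
    (h : (x.length : ℕ∞) ≤ lcpInf f g) : IsPrefix x f ↔ IsPrefix x g :=
  forall_congr' fun m => by
    rw [eq_of_lt_lcpInf (lt_of_lt_of_le (by exact_mod_cast m.2) h)]

lemma IsPrefix.length_le_lcpInf {x : List α} {f g : ℕ → α} (hf : IsPrefix x f)
    (hg : IsPrefix x g) : (x.length : ℕ∞) ≤ lcpInf f g :=
  le_lcpInf fun k hk => by rw [hf ⟨k, hk⟩, hg ⟨k, hk⟩]

lemma isPrefix_ofFn (f : ℕ → α) (ℓ : ℕ) : IsPrefix (List.ofFn fun k : Fin ℓ => f k) f := by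
  intro m
  simp

lemma lexLE.apply_le_apply {f g : ℕ → α} {m : ℕ} (hfg : lexLE f g)
    (hm : ∀ k < m, f k = g k) : f m ≤ g m := by
  rcases hfg with rfl | ⟨k, hk, hlt⟩
  · rfl
  rcases lt_trichotomy k m with hkm | rfl | hkm
  · exact absurd (hm k hkm) hlt.ne
  · exact hlt.le
  · exact (hk m hkm).le

lemma IsPrefix.of_lexLE_of_lexLE {x : List α} {f g h : ℕ → α} (hfg : lexLE f g)
    (hgh : lexLE g h) (hf : IsPrefix x f) (hh : IsPrefix x h) : IsPrefix x g := by
  suffices ∀ m (hm : m < x.length), g m = x.get ⟨m, hm⟩ from fun m => this m m.2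
  intro m
  induction m using Nat.strong_induction_on with
  | _ m ih =>
    intro hm
    have hfg' : ∀ k < m, f k = g k := fun k hk => by
      rw [hf ⟨k, hk.trans hm⟩, ih k hk (hk.trans hm)]
    have hgh' : ∀ k < m, g k = h k := fun k hk => by
      rw [hh ⟨k, hk.trans hm⟩, ih k hk (hk.trans hm)]
    have hlower := hfg.apply_le_apply hfg'
    have hupper := hgh.apply_le_apply hgh'
    rw [hf ⟨m, hm⟩] at hlower
    rw [hh ⟨m, hm⟩] at hupper
    exact le_antisymm hupper hlower

end InfiniteStrings

section LInterval

variable {L : ℕ → ℕ∞} {n i j : ℕ}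

lemma IsLInterval.eq_inf {ℓ : ℕ∞} (h : IsLInterval L n ℓ i j) : ℓ = (Finset.Ioo i j).inf L := by
  obtain ⟨-, -, -, hle, hattained, -⟩ := h
  rcases hattained with ⟨hij, rfl⟩ | ⟨r, hir, hrj, rfl⟩
  · have hempty : Finset.Ioo i j = ∅ :=
      Finset.eq_empty_of_forall_notMem fun r hr => by rw [Finset.mem_Ioo] at hr; omega
    rw [hempty, Finset.inf_empty]
  · refine le_antisymm (Finset.le_inf fun t ht => ?_)
      (Finset.inf_le (Finset.mem_Ioo.mpr ⟨hir, hrj⟩))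
    rw [Finset.mem_Ioo] at ht
    exact hle t ht.1 ht.2

lemma isLInterval_inf (hij : i < j) (hjn : j ≤ n) (hi : i = 0 ∨ L i < (Finset.Ioo i j).inf L)
    (hj : j = n ∨ L j < (Finset.Ioo i j).inf L) :
    IsLInterval L n ((Finset.Ioo i j).inf L) i j := by
  refine ⟨hij, hjn, hi, fun r hir hrj => Finset.inf_le (Finset.mem_Ioo.mpr ⟨hir, hrj⟩), ?_, hj⟩
  rcases (Finset.Ioo i j).eq_empty_or_nonempty with hempty | hne
  · refine .inl ⟨?_, by rw [hempty, Finset.inf_empty]⟩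
    by_contra hne
    exact Finset.notMem_empty (i + 1) (hempty ▸ Finset.mem_Ioo.mpr ⟨by omega, by omega⟩)
  · obtain ⟨r, hr, heq⟩ := Finset.exists_mem_eq_inf _ hne L
    rw [Finset.mem_Ioo] at hr
    exact .inr ⟨r, hr.1, hr.2, heq.symm⟩

end LInterval

section SuffixArray

variable {s n : ℕ} {W : Fin s → CyclicWord α} {SA : Fin n ≃ Pos W} {x : List α} {i j : ℕ}

lemma lcpArr_of_pos {r : ℕ} (h0 : 0 < r) (hr : r < n) :
    lcpArr W SA r = lcpInf (suffixAt W (SA ⟨r - 1, by omega⟩)) (suffixAt W (SA ⟨r, hr⟩)) :=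
  dif_pos ⟨h0, hr⟩

lemma isPrefix_iff_of_length_le_lcpArr {r : ℕ} (h0 : 0 < r) (hr : r < n)
    (h : (x.length : ℕ∞) ≤ lcpArr W SA r) :
    IsPrefix x (suffixAt W (SA ⟨r - 1, by omega⟩)) ↔ IsPrefix x (suffixAt W (SA ⟨r, hr⟩)) := by
  rw [lcpArr_of_pos h0 hr] at h
  exact isPrefix_iff_of_length_le_lcpInf h

lemma length_le_lcpArr_of_isPrefix {r : ℕ} (h0 : 0 < r) (hr : r < n)
    (hprev : IsPrefix x (suffixAt W (SA ⟨r - 1, by omega⟩)))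
    (hcur : IsPrefix x (suffixAt W (SA ⟨r, hr⟩))) : (x.length : ℕ∞) ≤ lcpArr W SA r := by
  rw [lcpArr_of_pos h0 hr]
  exact hprev.length_le_lcpInf hcur

lemma isPrefix_of_forall_length_le_lcpArr {k : ℕ} (hik : i ≤ k) (hk : k < n)
    (hi : IsPrefix x (suffixAt W (SA ⟨i, hik.trans_lt hk⟩)))
    (h : ∀ r, i < r → r ≤ k → (x.length : ℕ∞) ≤ lcpArr W SA r) :
    IsPrefix x (suffixAt W (SA ⟨k, hk⟩)) := by
  induction k, hik using Nat.le_induction with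
  | base => exact hi
  | succ k hik ih =>
    have hprev := ih (by omega) hi fun r hir hrk => h r hir (by omega)
    exact (isPrefix_iff_of_length_le_lcpArr (by omega) hk (h (k + 1) (by omega) le_rfl)).mp hprev

lemma length_le_lcpArr_of_isPrefix_of_isPrefix (hSA : IsCyclicSA W SA) {r u : Fin n} {t : ℕ}
    (hrt : r.val < t) (htu : t ≤ u.val) (hr : IsPrefix x (suffixAt W (SA r)))
    (hu : IsPrefix x (suffixAt W (SA u))) : (x.length : ℕ∞) ≤ lcpArr W SA t := by
  have hbetween (q : Fin n) (hrq : r ≤ q) (hqu : q ≤ u) : IsPrefix x (suffixAt W (SA q)) :=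
    hr.of_lexLE_of_lexLE (hSA r q hrq) (hSA q u hqu) hu
  exact length_le_lcpArr_of_isPrefix (by omega) (by omega)
    (hbetween _ (Fin.le_def.mpr (by dsimp only; omega)) (Fin.le_def.mpr (by dsimp only; omega)))
    (hbetween _ (Fin.le_def.mpr (by dsimp only; omega)) (Fin.le_def.mpr (by dsimp only; omega)))

namespace IsXInterval

variable (hx : IsXInterval W SA x i j)
include hx

lemma isPrefix {r : Fin n} (hir : i ≤ r.val) (hrj : r.val < j) :
    IsPrefix x (suffixAt W (SA r)) :=
  (hx.2.2 r).mpr ⟨hir, hrj⟩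

lemma length_le_lcpArr {r : ℕ} (hir : i < r) (hrj : r < j) :
    (x.length : ℕ∞) ≤ lcpArr W SA r :=
  length_le_lcpArr_of_isPrefix (by omega) (hrj.trans_le hx.2.1)
    (hx.isPrefix (by dsimp only; omega) (by dsimp only; omega))
    (hx.isPrefix (by dsimp only; omega) hrj)

lemma lcpArr_left_lt (hi : 0 < i) (hij : i < j) : lcpArr W SA i < x.length := by
  have hin : i < n := hij.trans_le hx.2.1
  by_contra! hle
  have hprev := (isPrefix_iff_of_length_le_lcpArr hi hin hle).mpr (hx.isPrefix le_rfl hij)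
  exact absurd ((hx.2.2 _).mp hprev).1 (by dsimp only; omega)

lemma lcpArr_right_lt (hij : i < j) (hjn : j < n) : lcpArr W SA j < x.length := by
  by_contra! hle
  have hcur := (isPrefix_iff_of_length_le_lcpArr (by omega) hjn hle).mp
    (hx.isPrefix (by dsimp only; omega) (by dsimp only; omega))
  exact absurd ((hx.2.2 _).mp hcur).2 (lt_irrefl j)

lemma length_le_inf : (x.length : ℕ∞) ≤ (Finset.Ioo i j).inf (lcpArr W SA) :=
  Finset.le_inf fun r hr => by
    rw [Finset.mem_Ioo] at hr
    exact hx.length_le_lcpArr hr.1 hr.2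

lemma isLInterval (hij : i < j) :
    IsLInterval (lcpArr W SA) n ((Finset.Ioo i j).inf (lcpArr W SA)) i j := by
  refine isLInterval_inf hij hx.2.1 ?_ ?_
  · rcases Nat.eq_zero_or_pos i with hi | hi
    · exact .inl hi
    · exact .inr ((hx.lcpArr_left_lt hi hij).trans_le hx.length_le_inf)
  · rcases hx.2.1.eq_or_lt with hjn | hjn
    · exact .inl hjn
    · exact .inr ((hx.lcpArr_right_lt hij hjn).trans_le hx.length_le_inf)

end IsXInterval

lemma IsLInterval.isXInterval (hSA : IsCyclicSA W SA) {ℓ : ℕ}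
    (h : IsLInterval (lcpArr W SA) n ℓ i j) :
    IsXInterval W SA (List.ofFn fun k : Fin ℓ => suffixAt W (SA ⟨i, h.1.trans_le h.2.1⟩) k)
      i j := by
  obtain ⟨hij, hjn, hleft, hmid, -, hright⟩ := h
  set x := List.ofFn fun k : Fin ℓ => suffixAt W (SA ⟨i, hij.trans_le hjn⟩) k
  have hlen : (x.length : ℕ∞) = ℓ := by simp [x]
  have hi : IsPrefix x (suffixAt W (SA ⟨i, hij.trans_le hjn⟩)) := isPrefix_ofFn _ ℓ
  have hinside (r : Fin n) (hir : i ≤ r.val) (hrj : r.val < j) : IsPrefix x (suffixAt W (SA r)) :=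
    isPrefix_of_forall_length_le_lcpArr hir r.2 hi fun t hit htr => hlen ▸ hmid t hit (by omega)
  refine ⟨hij.le, hjn, fun r => ⟨fun hr => ?_, fun hr => hinside r hr.1 hr.2⟩⟩
  by_contra hout
  rcases Nat.lt_or_ge r.val i with hri | hir
  · rcases hleft with hi0 | hlt
    · omega
    · exact (hlen ▸ length_le_lcpArr_of_isPrefix_of_isPrefix hSA hri le_rfl hr hi).not_gt hlt
  · have hjr : j ≤ r.val := by omega
    rcases hright with hjn | hlt
    · omega
    · have hprev := hinside ⟨j - 1, by omega⟩ (by dsimp only; omega) (by dsimp only; omega)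
      exact (hlen ▸ length_le_lcpArr_of_isPrefix_of_isPrefix hSA
        (by dsimp only; omega) hjr hprev hr).not_gt hlt

end SuffixArray

theorem xInterval_iff_lInterval {α : Type*} [LinearOrder α] {s n : ℕ}
    (W : Fin s → CyclicWord α) (SA : Fin n ≃ Pos W) (hSA : IsCyclicSA W SA) :
    (∀ (x : List α) (i j : ℕ), IsXInterval W SA x i j → i < j →
      ∃ ℓ : ℕ∞, IsLInterval (lcpArr W SA) n ℓ i j ∧ (x.length : ℕ∞) ≤ ℓ ∧
        ∀ ℓ' : ℕ∞, IsLInterval (lcpArr W SA) n ℓ' i j → ℓ' = ℓ) ∧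
    (∀ (ℓ : ℕ) (i j : ℕ), IsLInterval (lcpArr W SA) n (ℓ : ℕ∞) i j →
      ∃ x : List α, x.length = ℓ ∧ IsXInterval W SA x i j) :=
  ⟨fun _ _ _ hx hij => ⟨_, hx.isLInterval hij, hx.length_le_inf, fun _ h => h.eq_inf⟩,
    fun _ _ _ h => ⟨_, List.length_ofFn, h.isXInterval hSA⟩⟩

end SILA
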